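/- Any linear combination φ(K,L) = λ̄₁·K + λ̄₂·L + λ̄₃·(a·K^(−r) + (1−a)·L^(−r))^(−1/r) with λ̄₁ < 0, λ̄₂ < 0, λ̄₃ > 0 is concave on the open positive quadrant. -/

import Mathlib

/-!
The linear part is concave, so it suffices that the CES aggregate
`(a x₁ ^ q + (1 - a) x₂ ^ q) ^ (1 / q)` with `q = -r < 1` is concave on the positive quadrant.
Being positively homogeneous, it agrees at `z` with its derivative at `z` (Euler's identity), and
it lies below that linear functional everywhere: after dividing by `z` coordinatewise, this is
the inequality between the weighted power mean of exponent `q < 1` and the arithmetic mean.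
A function that lies below a linear functional touching it at each point is concave.
-/

open Real Set

theorem concaveOn_of_forall_le_linear {E : Type*} [AddCommGroup E] [Module ℝ E]
    {s : Set E} {f : E → ℝ} (hs : Convex ℝ s)
    (h : ∀ z ∈ s, ∃ ℓ : E →ₗ[ℝ] ℝ, ℓ z = f z ∧ ∀ x ∈ s, f x ≤ ℓ x) :
    ConcaveOn ℝ s f := by
  refine ⟨hs, fun x hx y hy t u ht hu htu => ?_⟩
  obtain ⟨ℓ, hℓz, hℓ⟩ := h _ (hs hx hy ht hu htu)
  calc t • f x + u • f y ≤ t • ℓ x + u • ℓ y := by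
        gcongr
        exacts [hℓ x hx, hℓ y hy]
    _ = f (t • x + u • y) := by rw [← hℓz, map_add, map_smul, map_smul]

theorem rpow_arith_mean2_le_arith_mean2_rpow_of_nonpos {w₁ w₂ z₁ z₂ p : ℝ}
    (hw₁ : 0 ≤ w₁) (hw₂ : 0 ≤ w₂) (hw : w₁ + w₂ = 1) (hz₁ : 0 < z₁) (hz₂ : 0 < z₂)
    (hp : p ≤ 0) :
    (w₁ * z₁ + w₂ * z₂) ^ p ≤ w₁ * z₁ ^ p + w₂ * z₂ ^ p :=
  calc (w₁ * z₁ + w₂ * z₂) ^ p ≤ (z₁ ^ w₁ * z₂ ^ w₂) ^ p :=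
        rpow_le_rpow_of_nonpos (by positivity)
          (geom_mean_le_arith_mean2_weighted hw₁ hw₂ hz₁.le hz₂.le hw) hp
    _ = (z₁ ^ p) ^ w₁ * (z₂ ^ p) ^ w₂ := by
        rw [mul_rpow (by positivity) (by positivity), ← rpow_mul hz₁.le, ← rpow_mul hz₂.le,
          ← rpow_mul hz₁.le, ← rpow_mul hz₂.le, mul_comm w₁, mul_comm w₂]
    _ ≤ w₁ * z₁ ^ p + w₂ * z₂ ^ p :=
        geom_mean_le_arith_mean2_weighted hw₁ hw₂ (by positivity) (by positivity) hw

theorem rpow_mean2_le_arith_mean2 {w₁ w₂ z₁ z₂ p : ℝ}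
    (hw₁ : 0 < w₁) (hw₂ : 0 < w₂) (hw : w₁ + w₂ = 1) (hz₁ : 0 < z₁) (hz₂ : 0 < z₂)
    (hp1 : p < 1) (hp0 : p ≠ 0) :
    (w₁ * z₁ ^ p + w₂ * z₂ ^ p) ^ (1 / p) ≤ w₁ * z₁ + w₂ * z₂ := by
  rw [one_div]
  rcases hp0.lt_or_gt with hp | hp
  · rw [rpow_inv_le_iff_of_neg (by positivity) (by positivity) hp]
    exact rpow_arith_mean2_le_arith_mean2_rpow_of_nonpos hw₁.le hw₂.le hw hz₁ hz₂ hp.le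
  · rw [rpow_inv_le_iff_of_pos (by positivity) (by positivity) hp]
    simpa using (concaveOn_rpow hp.le hp1.le).2 (mem_Ici.2 hz₁.le) (mem_Ici.2 hz₂.le)
      hw₁.le hw₂.le hw

/-- Constant-elasticity-of-substitution aggregate. -/
noncomputable def ces (a q : ℝ) (x : ℝ × ℝ) : ℝ :=
  (a * x.1 ^ q + (1 - a) * x.2 ^ q) ^ (1 / q)

/-- The derivative of `ces a q` at `z`. -/
noncomputable def cesGrad (a q : ℝ) (z : ℝ × ℝ) : ℝ × ℝ →ₗ[ℝ] ℝ :=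
  (a * z.1 ^ q + (1 - a) * z.2 ^ q) ^ (1 / q - 1) •
    ((a * z.1 ^ (q - 1)) • LinearMap.fst ℝ ℝ ℝ + ((1 - a) * z.2 ^ (q - 1)) • LinearMap.snd ℝ ℝ ℝ)

section
variable {a q : ℝ} {x z : ℝ × ℝ}

theorem cesGrad_apply (x : ℝ × ℝ) :
    cesGrad a q z x = (a * z.1 ^ q + (1 - a) * z.2 ^ q) ^ (1 / q - 1) *
      (a * z.1 ^ (q - 1) * x.1 + (1 - a) * z.2 ^ (q - 1) * x.2) := by
  simp only [cesGrad, LinearMap.smul_apply, LinearMap.add_apply, LinearMap.fst_apply,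
    LinearMap.snd_apply, smul_eq_mul]

theorem cesGrad_apply_self (ha0 : 0 < a) (ha1 : a < 1) (hz1 : 0 < z.1) (hz2 : 0 < z.2) :
    cesGrad a q z z = ces a q z := by
  have hZ : 0 < a * z.1 ^ q + (1 - a) * z.2 ^ q := by
    have : 0 < 1 - a := by linarith
    positivity
  rw [cesGrad_apply, ces, rpow_sub_one hZ.ne', rpow_sub_one hz1.ne', rpow_sub_one hz2.ne']
  field_simp

theorem ces_le_cesGrad_apply (ha0 : 0 < a) (ha1 : a < 1) (hq1 : q < 1) (hq0 : q ≠ 0)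
    (hx1 : 0 < x.1) (hx2 : 0 < x.2) (hz1 : 0 < z.1) (hz2 : 0 < z.2) :
    ces a q x ≤ cesGrad a q z x := by
  have ha1' : 0 < 1 - a := by linarith
  set Z := a * z.1 ^ q + (1 - a) * z.2 ^ q
  have hZpos : 0 < Z := by positivity
  -- power mean of the ratios `x i / z i` with the weights of the summands of `Z`
  have hmean := rpow_mean2_le_arith_mean2 (w₁ := a * z.1 ^ q / Z) (w₂ := (1 - a) * z.2 ^ q / Z)
    (by positivity) (by positivity) (by rw [← add_div]; exact div_self hZpos.ne')
    (div_pos hx1 hz1) (div_pos hx2 hz2) hq1 hq0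
  have hpow : a * z.1 ^ q / Z * (x.1 / z.1) ^ q + (1 - a) * z.2 ^ q / Z * (x.2 / z.2) ^ q
      = (a * x.1 ^ q + (1 - a) * x.2 ^ q) / Z := by
    rw [div_rpow hx1.le hz1.le, div_rpow hx2.le hz2.le]
    field_simp
  have hlin : a * z.1 ^ q / Z * (x.1 / z.1) + (1 - a) * z.2 ^ q / Z * (x.2 / z.2)
      = (a * z.1 ^ (q - 1) * x.1 + (1 - a) * z.2 ^ (q - 1) * x.2) / Z := by
    rw [rpow_sub_one hz1.ne', rpow_sub_one hz2.ne']
    field_simp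
  rw [hpow, hlin, div_rpow (by positivity) hZpos.le] at hmean
  rw [ces, cesGrad_apply, rpow_sub_one hZpos.ne']
  calc (a * x.1 ^ q + (1 - a) * x.2 ^ q) ^ (1 / q)
      = Z ^ (1 / q) * ((a * x.1 ^ q + (1 - a) * x.2 ^ q) ^ (1 / q) / Z ^ (1 / q)) := by
        field_simp
    _ ≤ Z ^ (1 / q) * ((a * z.1 ^ (q - 1) * x.1 + (1 - a) * z.2 ^ (q - 1) * x.2) / Z) := by
        gcongr
    _ = Z ^ (1 / q) / Z * (a * z.1 ^ (q - 1) * x.1 + (1 - a) * z.2 ^ (q - 1) * x.2) := by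
        ring

theorem concaveOn_ces (ha0 : 0 < a) (ha1 : a < 1) (hq1 : q < 1) (hq0 : q ≠ 0) :
    ConcaveOn ℝ {x : ℝ × ℝ | 0 < x.1 ∧ 0 < x.2} (ces a q) :=
  concaveOn_of_forall_le_linear ((convex_Ioi 0).prod (convex_Ioi 0)) fun z ⟨hz1, hz2⟩ =>
    ⟨cesGrad a q z, cesGrad_apply_self ha0 ha1 hz1 hz2,
      fun _ ⟨hx1, hx2⟩ => ces_le_cesGrad_apply ha0 ha1 hq1 hq0 hx1 hx2 hz1 hz2⟩

end

theorem scalarization_concave_general (a r l1 l2 l3 : ℝ)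
    (ha0 : 0 < a) (ha1 : a < 1) (hr : -1 < r) (hr0 : r ≠ 0)
    (hl3 : 0 < l3) :
    ConcaveOn ℝ {p : ℝ × ℝ | 0 < p.1 ∧ 0 < p.2}
      (fun p => l1 * p.1 + l2 * p.2 +
        l3 * (a * p.1 ^ (-r) + (1 - a) * p.2 ^ (-r)) ^ (-1 / r)) := by
  have hces := (concaveOn_ces ha0 ha1 (q := -r) (by linarith) (neg_ne_zero.2 hr0)).smul hl3.le
  have hlin := (l1 • LinearMap.fst ℝ ℝ ℝ + l2 • LinearMap.snd ℝ ℝ ℝ).concaveOn hces.1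
  refine (hlin.add hces).congr fun p _ => ?_
  simp only [Pi.add_apply, LinearMap.add_apply, LinearMap.smul_apply, LinearMap.fst_apply,
    LinearMap.snd_apply, smul_eq_mul, ces, div_neg, neg_div]

/-- the scalarization `φ(K,L) = λ̄₁K + λ̄₂L + λ̄₃(aK^(−r)+(1−a)L^(−r))^(−1/r)`
with `λ̄₁ < 0`, `λ̄₂ < 0`, `λ̄₃ > 0` is concave on the open positive quadrant. -/
theorem scalarization_concave (a r l1 l2 l3 : ℝ)
    (ha0 : 0 < a) (ha1 : a < 1) (hr : -1 < r) (hr0 : r ≠ 0)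
    (hl1 : l1 < 0) (hl2 : l2 < 0) (hl3 : 0 < l3) :
    ConcaveOn ℝ {p : ℝ × ℝ | 0 < p.1 ∧ 0 < p.2}
      (fun p => l1 * p.1 + l2 * p.2 +
        l3 * (a * p.1 ^ (-r) + (1 - a) * p.2 ^ (-r)) ^ (-1 / r)) :=
  scalarization_concave_general a r l1 l2 l3 ha0 ha1 hr hr0 hl3
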